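/- arXiv:1407.0938 — 2 statements merged into one kernel-verified Lean document; each statement's English description precedes it below -/
import Mathlib

section
/- Let n ≥ 3 and let (λ_{iμ}) be an SAP-frame on an open set U ⊆ ℝⁿ. Then the electromagnetic field strength vanishes identically: F_{μν} := ∂_ν C_μ − ∂_μ C_ν = 0 for all μ, ν at every point of U, i.e. the basic form C is a closed 1-form (equivalently, ∂_ν ω_μ = ∂_μ ω_ν for the associated 1-form ω). -/
open scoped BigOperators

/-- Partial derivative of a scalar field on ℝⁿ in the ν-th coordinate direction. -/
noncomputable def pd {n : ℕ} (f : (Fin n → ℝ) → ℝ) (ν : Fin n) (x : Fin n → ℝ) : ℝ :=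
  fderiv ℝ f x (Pi.single ν 1)


lemma pd_congr {n : ℕ} {f g : (Fin n → ℝ) → ℝ} {x : Fin n → ℝ} (ν : Fin n)
    (h : f =ᶠ[nhds x] g) : pd f ν x = pd g ν x := by
  unfold pd; rw [h.fderiv_eq]

lemma pd_sum {n m : ℕ} (f : Fin m → (Fin n → ℝ) → ℝ) (ν : Fin n) (x : Fin n → ℝ)
    (h : ∀ i, DifferentiableAt ℝ (f i) x) :
    pd (fun y => ∑ i, f i y) ν x = ∑ i, pd (f i) ν x := by
  unfold pd
  rw [fderiv_fun_sum (fun i _ => h i)]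
  simp

lemma pd_mul {n : ℕ} (f g : (Fin n → ℝ) → ℝ) (ν : Fin n) (x : Fin n → ℝ)
    (hf : DifferentiableAt ℝ f x) (hg : DifferentiableAt ℝ g x) :
    pd (fun y => f y * g y) ν x = pd f ν x * g x + f x * pd g ν x := by
  unfold pd
  rw [fderiv_fun_mul hf hg]
  simp
  ring

lemma pd_sub {n : ℕ} (f g : (Fin n → ℝ) → ℝ) (ν : Fin n) (x : Fin n → ℝ)
    (hf : DifferentiableAt ℝ f x) (hg : DifferentiableAt ℝ g x) :
    pd (fun y => f y - g y) ν x = pd f ν x - pd g ν x := by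
  unfold pd
  rw [fderiv_fun_sub hf hg]; simp

lemma pd_const {n : ℕ} (c : ℝ) (ν : Fin n) (x : Fin n → ℝ) :
    pd (fun _ => c) ν x = 0 := by
  unfold pd; simp

lemma pd_contDiffAt {n : ℕ} {f : (Fin n → ℝ) → ℝ} {x : Fin n → ℝ}
    (hf : ContDiffAt ℝ (⊤ : ℕ∞) f x) (ν : Fin n) : ContDiffAt ℝ (⊤ : ℕ∞) (pd f ν) x := by
  have h1 : ContDiffAt ℝ (⊤ : ℕ∞) (fderiv ℝ f) x := hf.fderiv_right (by simp)
  exact (ContinuousLinearMap.apply ℝ ℝ (Pi.single ν 1 : Fin n → ℝ)).contDiff.contDiffAt.comp x h1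

lemma pd_symm {n : ℕ} {f : (Fin n → ℝ) → ℝ} {x : Fin n → ℝ}
    (hf : ContDiffAt ℝ (⊤ : ℕ∞) f x) (μ ν : Fin n) :
    pd (pd f μ) ν x = pd (pd f ν) μ x := by
  have hsym : IsSymmSndFDerivAt ℝ f x := hf.isSymmSndFDerivAt (by
    rw [minSmoothness_of_isRCLikeNormedField]; exact (WithTop.coe_le_coe.mpr (le_top : (2:ℕ∞) ≤ ⊤) : ((2:ℕ∞) : WithTop ℕ∞) ≤ ((⊤:ℕ∞) : WithTop ℕ∞)))
  have hd : DifferentiableAt ℝ (fderiv ℝ f) x :=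
    (hf.fderiv_right (m := 1) (WithTop.coe_le_coe.mpr le_top)).differentiableAt (by simp)
  have key : ∀ v w : Fin n → ℝ,
      fderiv ℝ (fun y => fderiv ℝ f y v) x w = fderiv ℝ (fderiv ℝ f) x w v := by
    intro v w
    have : HasFDerivAt (fun y => fderiv ℝ f y v)
        ((ContinuousLinearMap.apply ℝ ℝ v).comp (fderiv ℝ (fderiv ℝ f) x)) x :=
      (ContinuousLinearMap.apply ℝ ℝ v).hasFDerivAt.comp x hd.hasFDerivAt
    rw [this.fderiv]; rfl
  unfold pd
  rw [key, key, hsym]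

/-- For an SAP-frame (n ≥ 3) the electromagnetic field strength
F_{μν} := ∂_ν C_μ − ∂_μ C_ν vanishes identically, i.e. the basic form C is closed
(equivalently, ∂_ν ω_μ = ∂_μ ω_ν for the associated 1-form ω). -/
theorem sap_em_field_vanishes
    (n : ℕ) (hn : 3 ≤ n)
    (U : Set (Fin n → ℝ)) (hU : IsOpen U)
    (lam laminv : Fin n → Fin n → (Fin n → ℝ) → ℝ)
    (hlam_smooth : ∀ i μ, ContDiffOn ℝ (⊤ : ℕ∞) (lam i μ) U)
    (hlaminv_smooth : ∀ i μ, ContDiffOn ℝ (⊤ : ℕ∞) (laminv i μ) U)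
    (hinv₁ : ∀ x ∈ U, ∀ μ ν, (∑ i, laminv i μ x * lam i ν x) = if μ = ν then (1:ℝ) else 0)
    (hinv₂ : ∀ x ∈ U, ∀ i j, (∑ μ, laminv i μ x * lam j μ x) = if i = j then (1:ℝ) else 0)
    -- the canonical (Weitzenböck) connection Γ^α_{μν} = Σ_i λ_i^α ∂_ν λ_{iμ}
    (Γ : Fin n → Fin n → Fin n → (Fin n → ℝ) → ℝ)
    (hΓ : ∀ α μ ν x, Γ α μ ν x = ∑ i, laminv i α x * pd (lam i μ) ν x)
    -- the torsion Λ^α_{μν} = Γ^α_{μν} − Γ^α_{νμ}, the basic form C_μ = Σ_α Λ^α_{μα}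
    (Λ : Fin n → Fin n → Fin n → (Fin n → ℝ) → ℝ)
    (hΛ : ∀ α μ ν x, Λ α μ ν x = Γ α μ ν x - Γ α ν μ x)
    (C : Fin n → (Fin n → ℝ) → ℝ)
    (hC : ∀ μ x, C μ x = ∑ α, Λ α μ α x)
    -- the SAP (semi-symmetry) condition: Λ^α_{μν} = δ^α_μ ω_ν − δ^α_ν ω_μ
    (ω : Fin n → (Fin n → ℝ) → ℝ)
    (hω_smooth : ∀ μ, ContDiffOn ℝ (⊤ : ℕ∞) (ω μ) U)
    (hSAP : ∀ x ∈ U, ∀ α μ ν,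
      Λ α μ ν x = (if α = μ then ω ν x else 0) - (if α = ν then ω μ x else 0)) :
    ∀ x ∈ U, ∀ μ ν,
      (pd (C μ) ν x - pd (C ν) μ x = 0) ∧ pd (ω μ) ν x = pd (ω ν) μ x := by
  -- basic differentiability facts
  have lamCD : ∀ x ∈ U, ∀ i μ, ContDiffAt ℝ (⊤ : ℕ∞) (lam i μ) x :=
    fun x hx i μ => (hlam_smooth i μ).contDiffAt (hU.mem_nhds hx)
  have laminvCD : ∀ x ∈ U, ∀ i μ, ContDiffAt ℝ (⊤ : ℕ∞) (laminv i μ) x :=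
    fun x hx i μ => (hlaminv_smooth i μ).contDiffAt (hU.mem_nhds hx)
  have ωCD : ∀ x ∈ U, ∀ μ, ContDiffAt ℝ (⊤ : ℕ∞) (ω μ) x :=
    fun x hx μ => (hω_smooth μ).contDiffAt (hU.mem_nhds hx)
  have ΓCD : ∀ x ∈ U, ∀ α μ ν, ContDiffAt ℝ (⊤ : ℕ∞) (Γ α μ ν) x := by
    intro x hx α μ ν
    have hfe : Γ α μ ν = fun y => ∑ i, laminv i α y * pd (lam i μ) ν y :=
      funext (hΓ α μ ν)
    rw [hfe]
    exact ContDiffAt.sum fun i _ =>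
      (laminvCD x hx i α).mul (pd_contDiffAt (lamCD x hx i μ) ν)
  -- Step 1: frame equation  ∑_α λ_{jα} Γ^α_{μν} = ∂_ν λ_{jμ}  on U
  have step1 : ∀ y ∈ U, ∀ j μ ν, (∑ α, lam j α y * Γ α μ ν y) = pd (lam j μ) ν y := by
    intro y hy j μ ν
    have h1 : ∀ α, lam j α y * Γ α μ ν y
        = ∑ i, laminv i α y * lam j α y * pd (lam i μ) ν y := by
      intro α
      rw [hΓ, Finset.mul_sum]
      exact Finset.sum_congr rfl fun i _ => by ring
    rw [Finset.sum_congr rfl fun α _ => h1 α, Finset.sum_comm]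
    have h2 : ∀ i, (∑ α, laminv i α y * lam j α y * pd (lam i μ) ν y)
        = (if i = j then (1:ℝ) else 0) * pd (lam i μ) ν y := by
      intro i
      rw [← Finset.sum_mul, hinv₂ y hy i j]
    rw [Finset.sum_congr rfl fun i _ => h2 i]
    simp
  intro x hx
  -- contraction lemma
  have contract : ∀ (ρ : Fin n) (g : Fin n → ℝ),
      (∑ j, laminv j ρ x * ∑ σ, lam j σ x * g σ) = g ρ := by
    intro ρ g
    have h1 : ∀ j, laminv j ρ x * ∑ σ, lam j σ x * g σ
        = ∑ σ, laminv j ρ x * lam j σ x * g σ := by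
      intro j
      rw [Finset.mul_sum]
      exact Finset.sum_congr rfl fun σ _ => by ring
    rw [Finset.sum_congr rfl fun j _ => h1 j, Finset.sum_comm]
    have h2 : ∀ σ, (∑ j, laminv j ρ x * lam j σ x * g σ)
        = (if ρ = σ then (1:ℝ) else 0) * g σ := by
      intro σ
      rw [← Finset.sum_mul, hinv₁ x hx ρ σ]
    rw [Finset.sum_congr rfl fun σ _ => h2 σ]
    simp
  -- expansion of second derivatives of the frame
  have expand : ∀ j a b c, pd (pd (lam j a) b) c x
      = ∑ σ, lam j σ x * ((∑ α, Γ σ α c x * Γ α a b x) + pd (Γ σ a b) c x) := by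
    intro j a b c
    have hev : pd (lam j a) b =ᶠ[nhds x] fun y => ∑ α, lam j α y * Γ α a b y := by
      filter_upwards [hU.mem_nhds hx] with y hy
      exact (step1 y hy j a b).symm
    rw [pd_congr c hev,
      pd_sum (fun α y => lam j α y * Γ α a b y) c x (fun α => ((lamCD x hx j α).differentiableAt (by simp)).mul
        ((ΓCD x hx α a b).differentiableAt (by simp)))]
    have h1 : ∀ α, pd (fun y => lam j α y * Γ α a b y) c x
        = (∑ σ, lam j σ x * Γ σ α c x) * Γ α a b x + lam j α x * pd (Γ α a b) c x := by
      intro α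
      rw [pd_mul _ _ c x ((lamCD x hx j α).differentiableAt (by simp))
        ((ΓCD x hx α a b).differentiableAt (by simp)), ← step1 x hx j α c]
    rw [Finset.sum_congr rfl fun α _ => h1 α, Finset.sum_add_distrib]
    have h2 : ∑ α, (∑ σ, lam j σ x * Γ σ α c x) * Γ α a b x
        = ∑ σ, lam j σ x * (∑ α, Γ σ α c x * Γ α a b x) := by
      simp_rw [Finset.sum_mul, Finset.mul_sum]
      rw [Finset.sum_comm]
      exact Finset.sum_congr rfl fun σ _ => Finset.sum_congr rfl fun α _ => by ring
    rw [h2, ← Finset.sum_add_distrib]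
    exact Finset.sum_congr rfl fun σ _ => by ring
  -- flatness of the Weitzenböck connection (contracted form)
  have flatF : ∀ ρ a b c,
      (∑ α, Γ ρ α c x * Γ α a b x) + pd (Γ ρ a b) c x
      = (∑ α, Γ ρ α b x * Γ α a c x) + pd (Γ ρ a c) b x := by
    intro ρ a b c
    have hsy : ∀ j : Fin n,
        (∑ σ, lam j σ x * ((∑ α, Γ σ α c x * Γ α a b x) + pd (Γ σ a b) c x))
        = ∑ σ, lam j σ x * ((∑ α, Γ σ α b x * Γ α a c x) + pd (Γ σ a c) b x) := by
      intro j
      rw [← expand j a b c, ← expand j a c b]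
      exact pd_symm (lamCD x hx j a) b c
    have e1 := contract ρ (fun σ => (∑ α, Γ σ α c x * Γ α a b x) + pd (Γ σ a b) c x)
    have e2 := contract ρ (fun σ => (∑ α, Γ σ α b x * Γ α a c x) + pd (Γ σ a c) b x)
    rw [← e1, ← e2]
    exact Finset.sum_congr rfl fun j _ => by rw [hsy j]
  -- derivative of the torsion via SAP
  have pdΛ : ∀ ρ a b c, pd (Γ ρ a b) c x - pd (Γ ρ b a) c x
      = (if ρ = a then pd (ω b) c x else 0) - (if ρ = b then pd (ω a) c x else 0) := by
    intro ρ a b c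
    have hdiff : pd (fun y => Γ ρ a b y - Γ ρ b a y) c x
        = pd (Γ ρ a b) c x - pd (Γ ρ b a) c x :=
      pd_sub _ _ c x ((ΓCD x hx ρ a b).differentiableAt (by simp))
        ((ΓCD x hx ρ b a).differentiableAt (by simp))
    rw [← hdiff]
    have hev : (fun y => Γ ρ a b y - Γ ρ b a y) =ᶠ[nhds x]
        (fun y => (if ρ = a then (1:ℝ) else 0) * ω b y
                - (if ρ = b then (1:ℝ) else 0) * ω a y) := by
      filter_upwards [hU.mem_nhds hx] with y hy
      have := hSAP y hy ρ a b
      rw [hΛ] at this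
      rw [this]
      split_ifs <;> ring
    rw [pd_congr c hev,
      pd_sub (fun y => (if ρ = a then (1:ℝ) else 0) * ω b y)
        (fun y => (if ρ = b then (1:ℝ) else 0) * ω a y) c x ((differentiableAt_const _).mul ((ωCD x hx b).differentiableAt (by simp)))
        ((differentiableAt_const _).mul ((ωCD x hx a).differentiableAt (by simp))),
      pd_mul _ _ c x (differentiableAt_const _) ((ωCD x hx b).differentiableAt (by simp)),
      pd_mul _ _ c x (differentiableAt_const _) ((ωCD x hx a).differentiableAt (by simp)),
      pd_const, pd_const]
    split_ifs <;> ring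
  -- symmetry of ∂ω using three distinct indices
  have key : ∀ γ μ ν : Fin n, γ ≠ μ → γ ≠ ν → μ ≠ ν →
      pd (ω μ) ν x = pd (ω ν) μ x := by
    intro γ μ ν hgm hgn hmn
    have f1 := flatF γ γ μ ν
    have f2 := flatF γ μ ν γ
    have f3 := flatF γ ν γ μ
    have p1 := pdΛ γ γ μ ν
    have p2 := pdΛ γ μ ν γ
    have p3 := pdΛ γ ν γ μ
    simp [hgm, hgn] at p1 p2 p3
    -- quadratic terms vanish
    have l1 := hSAP x hx γ γ μ
    have l2 := hSAP x hx γ μ ν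
    have l3 := hSAP x hx γ ν γ
    rw [hΛ] at l1 l2 l3
    simp [hgm, hgn] at l1 l2 l3
    have q : (∑ α, (Γ γ α μ x * Λ α γ ν x + Γ γ α ν x * Λ α μ γ x
        + Γ γ α γ x * Λ α ν μ x)) = 0 := by
      have hterm : ∀ α, Γ γ α μ x * Λ α γ ν x + Γ γ α ν x * Λ α μ γ x
          + Γ γ α γ x * Λ α ν μ x
          = (if α = γ then Γ γ α μ x * ω ν x - Γ γ α ν x * ω μ x else 0)
          + (if α = μ then Γ γ α ν x * ω γ x - Γ γ α γ x * ω ν x else 0)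
          + (if α = ν then Γ γ α γ x * ω μ x - Γ γ α μ x * ω γ x else 0) := by
        intro α
        rw [hSAP x hx α γ ν, hSAP x hx α μ γ, hSAP x hx α ν μ]
        by_cases h1 : α = γ <;> by_cases h2 : α = μ <;> by_cases h3 : α = ν
        all_goals
          first
            | exact absurd (h1.symm.trans h2) hgm
            | exact absurd (h1.symm.trans h3) hgn
            | exact absurd (h2.symm.trans h3) hmn
            | (simp [h1, h2, h3, hgm, hgn, hmn, Ne.symm hgm, Ne.symm hgn, Ne.symm hmn]
               <;> try ring)
      rw [Finset.sum_congr rfl fun α _ => hterm α]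
      rw [Finset.sum_add_distrib, Finset.sum_add_distrib,
        Finset.sum_ite_eq' Finset.univ, Finset.sum_ite_eq' Finset.univ,
        Finset.sum_ite_eq' Finset.univ]
      simp only [Finset.mem_univ, if_pos]
      linear_combination ω ν x * l1 + ω γ x * l2 + ω μ x * l3
    have qsplit : (∑ α, (Γ γ α μ x * Λ α γ ν x + Γ γ α ν x * Λ α μ γ x
        + Γ γ α γ x * Λ α ν μ x))
        = ((∑ α, Γ γ α μ x * Γ α γ ν x) - (∑ α, Γ γ α ν x * Γ α γ μ x))
        + ((∑ α, Γ γ α ν x * Γ α μ γ x) - (∑ α, Γ γ α γ x * Γ α μ ν x))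
        + ((∑ α, Γ γ α γ x * Γ α ν μ x) - (∑ α, Γ γ α μ x * Γ α ν γ x)) := by
      simp only [hΛ, mul_sub]
      rw [Finset.sum_add_distrib, Finset.sum_add_distrib,
        Finset.sum_sub_distrib, Finset.sum_sub_distrib, Finset.sum_sub_distrib]
      ring
    rw [qsplit] at q
    linarith [f1, f2, f3, p1, p2, p3, q]
  -- symmetry of ∂ω in general
  have sym : ∀ μ ν : Fin n, pd (ω μ) ν x = pd (ω ν) μ x := by
    intro μ ν
    by_cases hmn : μ = ν
    · rw [hmn]
    · obtain ⟨γ, hgm, hgn⟩ : ∃ γ : Fin n, γ ≠ μ ∧ γ ≠ ν := by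
        by_contra h
        push_neg at h
        have hsub : (Finset.univ : Finset (Fin n)) ⊆ {μ, ν} := by
          intro γ _
          by_cases h1 : γ = μ
          · simp [h1]
          · simp [h γ h1]
        have hcard := Finset.card_le_card hsub
        simp only [Finset.card_univ, Fintype.card_fin] at hcard
        have : ({μ, ν} : Finset (Fin n)).card ≤ 2 :=
          (Finset.card_insert_le _ _).trans (by simp)
        omega
      exact key γ μ ν hgm hgn hmn
  -- the basic form is (1-n)·ω
  intro μ ν
  refine ⟨?_, sym μ ν⟩
  have hCpd : ∀ ρ : Fin n, ∀ σ : Fin n, pd (C ρ) σ x = (1 - (n:ℝ)) * pd (ω ρ) σ x := by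
    intro ρ σ
    have hev : C ρ =ᶠ[nhds x] fun y => (1 - (n:ℝ)) * ω ρ y := by
      filter_upwards [hU.mem_nhds hx] with y hy
      rw [hC]
      have : ∀ α, Λ α ρ α y = (if α = ρ then ω α y else 0) - ω ρ y := by
        intro α
        rw [hSAP y hy α ρ α]
        simp
      rw [Finset.sum_congr rfl fun α _ => this α, Finset.sum_sub_distrib,
        Finset.sum_ite_eq' Finset.univ, Finset.sum_const]
      simp only [Finset.mem_univ, if_pos, Finset.card_univ, Fintype.card_fin]
      ring
    rw [pd_congr σ hev,
      pd_mul _ _ σ x (differentiableAt_const _) ((ωCD x hx ρ).differentiableAt (by simp)),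
      pd_const]
    ring
  rw [hCpd μ ν, hCpd ν μ, sym μ ν]
  ring
end

section
/- (Lemma 1(e) of the paper.) Let n ≥ 2 and treat the frame values A = (A_{iβ}) and the frame-derivative values B = (B_{iβγ}) as independent variables. At any pair (A, B) with A invertible, the partial derivative of ω² with respect to the entry B_{iβγ}, holding A fixed, equals (2/(1 − n)) [ λ_i^γ ω^β − λ_i^β ω^γ ]. -/
open scoped BigOperators

/-- The inverse-frame components λ_i^α of a frame matrix `A` (so that
Σ_i λ_i^α A_{iν} = δ^α_ν when `A` is invertible). -/
noncomputable def lamUp {n : ℕ} (A : Fin n → Fin n → ℝ) (i α : Fin n) : ℝ :=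
  (Matrix.of A)⁻¹ α i

/-- The metric g_{μν} = Σ_i A_{iμ} A_{iν} built from the frame matrix `A`. -/
noncomputable def gOf {n : ℕ} (A : Fin n → Fin n → ℝ) : Matrix (Fin n) (Fin n) ℝ :=
  Matrix.of fun μ ν => ∑ i, A i μ * A i ν

/-- ω_μ(A,B) = (1/(1−n)) Σ_{i,α} λ_i^α (B_{iμα} − B_{iαμ}), with the frame values `A`
and the frame-derivative values `B` treated as independent variables. -/
noncomputable def omegaOf {n : ℕ}
    (p : (Fin n → Fin n → ℝ) × (Fin n → Fin n → Fin n → ℝ)) (μ : Fin n) : ℝ :=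
  (1 / (1 - (n : ℝ))) * ∑ i, ∑ α, lamUp p.1 i α * (p.2 i μ α - p.2 i α μ)

/-- ω^β(A,B) = Σ_α g^{βα} ω_α. -/
noncomputable def omegaUpOf {n : ℕ}
    (p : (Fin n → Fin n → ℝ) × (Fin n → Fin n → Fin n → ℝ)) (β : Fin n) : ℝ :=
  ∑ α, (gOf p.1)⁻¹ β α * omegaOf p α

/-- ω²(A,B) = Σ_{μ,ν} g^{μν} ω_μ ω_ν. -/
noncomputable def omegaSqOf {n : ℕ}
    (p : (Fin n → Fin n → ℝ) × (Fin n → Fin n → Fin n → ℝ)) : ℝ :=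
  ∑ μ, ∑ ν, (gOf p.1)⁻¹ μ ν * omegaOf p μ * omegaOf p ν

/-! Since `ω` is linear in `B`, along the line `t ↦ (A, B + t E)` the function `ω²` is a quadratic
polynomial in `t`, whose linear coefficient is `2 Σ_μ ω_μ(A, E) ω^μ(A, B)` by the symmetry of `g⁻¹`.
For `E` the elementary tensor at `(i, β, γ)` one has
`ω_μ(A, E) = (δ_μβ λ_i^γ − δ_μγ λ_i^β) / (1 − n)`. The full derivative exists because matrix
inversion is differentiable at invertible matrices, so the directional derivative along the line
is the value of `fderiv`. -/

open Matrix

theorem differentiableAt_matrix_inv {ι : Type*} [Fintype ι] [DecidableEq ι] {A : ι → ι → ℝ}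
    (hA : IsUnit (of A).det) :
    DifferentiableAt ℝ (fun X : ι → ι → ℝ => of.symm (of X)⁻¹) A := by
  -- Any submultiplicative norm makes `Matrix ι ι ℝ` a complete normed algebra, where inversion is
  -- differentiable at units; `ofLinearEquiv` transports this back to the product norm.
  let _ : NormedRing (Matrix ι ι ℝ) := Matrix.linftyOpNormedRing
  let _ : NormedAlgebra ℝ (Matrix ι ι ℝ) := Matrix.linftyOpNormedAlgebra
  let e := (ofLinearEquiv ℝ : (ι → ι → ℝ) ≃ₗ[ℝ] Matrix ι ι ℝ).toContinuousLinearEquiv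
  have hinv := differentiableAt_inverse (𝕜 := ℝ) ((isUnit_iff_isUnit_det _).2 hA)
  simp only [nonsing_inv_eq_ringInverse]
  exact e.symm.differentiableAt.comp A (hinv.comp A e.differentiableAt)

theorem Matrix.IsSymm.quadForm_add_mul {R ι : Type*} [CommRing R] [Fintype ι] {G : Matrix ι ι R}
    (hG : G.IsSymm) (a d : ι → R) (t : R) :
    ∑ μ, ∑ ν, G μ ν * (a μ + t * d μ) * (a ν + t * d ν)
      = ∑ μ, ∑ ν, G μ ν * a μ * a ν + 2 * t * ∑ μ, d μ * ∑ ν, G μ ν * a ν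
        + t ^ 2 * ∑ μ, ∑ ν, G μ ν * d μ * d ν := by
  have hexp : ∀ μ ν, G μ ν * (a μ + t * d μ) * (a ν + t * d ν)
      = G μ ν * a μ * a ν + t * (d μ * (G μ ν * a ν)) + t * (d ν * (G ν μ * a μ))
        + t ^ 2 * (G μ ν * d μ * d ν) := by
    intro μ ν
    rw [hG.apply μ ν]
    ring
  simp only [hexp, Finset.sum_add_distrib]
  rw [Finset.sum_comm (f := fun μ ν => t * (d ν * (G ν μ * a μ)))]
  simp only [← Finset.mul_sum]
  ring

section Frame

variable {n : ℕ} {A : Fin n → Fin n → ℝ}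

theorem differentiableAt_lamUp (hA : IsUnit (of A).det) (i α : Fin n) :
    DifferentiableAt ℝ (fun X : Fin n → Fin n → ℝ => lamUp X i α) A :=
  differentiableAt_pi.1 (differentiableAt_pi.1 (differentiableAt_matrix_inv hA) α) i

theorem gOf_eq_transpose_mul_self : gOf A = (of A)ᵀ * of A := by
  ext μ ν
  simp [gOf, mul_apply]

theorem isUnit_det_gOf (hA : IsUnit (of A).det) : IsUnit (gOf A).det := by
  rw [gOf_eq_transpose_mul_self, det_mul, det_transpose]
  exact hA.mul hA

theorem isSymm_gOf_inv : ((gOf A)⁻¹).IsSymm := by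
  rw [gOf_eq_transpose_mul_self]
  exact (isSymm_transpose_mul_self _).inv

theorem differentiableAt_gOf_inv (hA : IsUnit (of A).det) (μ ν : Fin n) :
    DifferentiableAt ℝ (fun X : Fin n → Fin n → ℝ => (gOf X)⁻¹ μ ν) A := by
  have hg : DifferentiableAt ℝ (fun X : Fin n → Fin n → ℝ => of.symm (gOf X)) A := by
    simp only [gOf, Equiv.symm_apply_apply]
    fun_prop
  have := (differentiableAt_matrix_inv (A := of.symm (gOf A)) (isUnit_det_gOf hA)).comp A hg
  exact differentiableAt_pi.1 (differentiableAt_pi.1 this μ) ν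

variable {B : Fin n → Fin n → Fin n → ℝ}

theorem differentiableAt_omegaOf (hA : IsUnit (of A).det) (μ : Fin n) :
    DifferentiableAt ℝ
      (fun p : (Fin n → Fin n → ℝ) × (Fin n → Fin n → Fin n → ℝ) => omegaOf p μ) (A, B) := by
  have hlam := differentiableAt_lamUp hA
  unfold omegaOf
  fun_prop

theorem differentiableAt_omegaSqOf (hA : IsUnit (of A).det) :
    DifferentiableAt ℝ omegaSqOf (A, B) := by
  have hg := differentiableAt_gOf_inv hA
  have hω := differentiableAt_omegaOf (B := B) hA
  unfold omegaSqOf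
  refine DifferentiableAt.fun_sum fun μ _ => DifferentiableAt.fun_sum fun ν _ => ?_
  have hgμν : DifferentiableAt ℝ (fun p : (Fin n → Fin n → ℝ) × (Fin n → Fin n → Fin n → ℝ) =>
      (gOf p.1)⁻¹ μ ν) (A, B) :=
    DifferentiableAt.comp (g := fun X => (gOf X)⁻¹ μ ν) (A, B) (hg μ ν) differentiableAt_fst
  exact (hgμν.mul (hω μ)).mul (hω ν)

theorem omegaOf_add_smul (E : Fin n → Fin n → Fin n → ℝ) (t : ℝ) (μ : Fin n) :
    omegaOf (A, B + t • E) μ = omegaOf (A, B) μ + t * omegaOf (A, E) μ := by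
  simp only [omegaOf, Pi.add_apply, Pi.smul_apply, smul_eq_mul, Finset.mul_sum,
    ← Finset.sum_add_distrib]
  exact Finset.sum_congr rfl fun i _ => Finset.sum_congr rfl fun α _ => by ring

theorem omegaSqOf_add_smul (E : Fin n → Fin n → Fin n → ℝ) (t : ℝ) :
    omegaSqOf (A, B + t • E) = omegaSqOf (A, B)
      + 2 * t * ∑ μ, omegaOf (A, E) μ * omegaUpOf (A, B) μ + t ^ 2 * omegaSqOf (A, E) := by
  simp only [omegaSqOf, omegaUpOf, omegaOf_add_smul]
  exact isSymm_gOf_inv.quadForm_add_mul _ _ t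

theorem hasDerivAt_omegaSqOf_add_smul (E : Fin n → Fin n → Fin n → ℝ) :
    HasDerivAt (fun t : ℝ => omegaSqOf (A, B + t • E))
      (2 * ∑ μ, omegaOf (A, E) μ * omegaUpOf (A, B) μ) 0 := by
  simp only [omegaSqOf_add_smul]
  have h := (((hasDerivAt_id (0 : ℝ)).const_mul (2 : ℝ)).mul_const
    (∑ μ, omegaOf (A, E) μ * omegaUpOf (A, B) μ)).add
    ((hasDerivAt_pow 2 (0 : ℝ)).mul_const (omegaSqOf (A, E)))
  simpa [add_assoc] using h.const_add (omegaSqOf (A, B))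

theorem fderiv_omegaSqOf_apply_inr (hA : IsUnit (of A).det) (E : Fin n → Fin n → Fin n → ℝ) :
    fderiv ℝ omegaSqOf (A, B) (0, E) = 2 * ∑ μ, omegaOf (A, E) μ * omegaUpOf (A, B) μ := by
  have hline : HasDerivAt (fun t : ℝ => ((A, B + t • E) :
      (Fin n → Fin n → ℝ) × (Fin n → Fin n → Fin n → ℝ))) (0, E) 0 := by
    refine (hasDerivAt_const _ _).prodMk ?_
    simpa using ((hasDerivAt_id (0 : ℝ)).smul_const E).const_add B
  have h := (differentiableAt_omegaSqOf (B := B) hA).hasFDerivAt.comp_hasDerivAt_of_eq 0 hline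
    (by simp)
  exact h.unique (hasDerivAt_omegaSqOf_add_smul E)

theorem omegaOf_ite_eq (i β γ μ : Fin n) :
    omegaOf (A, fun i' β' γ' => if i' = i ∧ β' = β ∧ γ' = γ then (1 : ℝ) else 0) μ
      = 1 / (1 - (n : ℝ)) *
          ((if μ = β then lamUp A i γ else 0) - if μ = γ then lamUp A i β else 0) := by
  simp only [omegaOf, mul_sub, mul_ite, mul_one, mul_zero, Finset.sum_sub_distrib, ite_and,
    Finset.sum_ite_irrel, Finset.sum_const_zero, Finset.sum_ite_eq', Finset.mem_univ, if_true]

end Frame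

theorem sap_lemma1e_general
    (n : ℕ)
    (A : Fin n → Fin n → ℝ) (B : Fin n → Fin n → Fin n → ℝ)
    (hA : IsUnit (Matrix.of A).det)
    (i β γ : Fin n) :
    fderiv ℝ (fun p : (Fin n → Fin n → ℝ) × (Fin n → Fin n → Fin n → ℝ) => omegaSqOf p)
        (A, B) (0, fun i' β' γ' => if i' = i ∧ β' = β ∧ γ' = γ then (1:ℝ) else 0)
      = (2 / (1 - (n : ℝ))) *
          (lamUp A i γ * omegaUpOf (A, B) β - lamUp A i β * omegaUpOf (A, B) γ) := by
  simp only [fderiv_omegaSqOf_apply_inr hA, omegaOf_ite_eq, sub_mul, ite_mul, zero_mul,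
    Finset.sum_sub_distrib, Finset.sum_ite_eq', Finset.mem_univ, if_true, mul_assoc,
    ← Finset.mul_sum]
  ring

/-- (Lemma 1(e) of the paper.) At any pair (A,B) with A invertible,
∂ω²/∂B_{iβγ} = (2/(1 − n)) [ λ_i^γ ω^β − λ_i^β ω^γ ]. -/
theorem sap_lemma1e
    (n : ℕ) (hn : 2 ≤ n)
    (A : Fin n → Fin n → ℝ) (B : Fin n → Fin n → Fin n → ℝ)
    (hA : IsUnit (Matrix.of A).det)
    (i β γ : Fin n) :
    fderiv ℝ (fun p : (Fin n → Fin n → ℝ) × (Fin n → Fin n → Fin n → ℝ) => omegaSqOf p)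
        (A, B) (0, fun i' β' γ' => if i' = i ∧ β' = β ∧ γ' = γ then (1:ℝ) else 0)
      = (2 / (1 - (n : ℝ))) *
          (lamUp A i γ * omegaUpOf (A, B) β - lamUp A i β * omegaUpOf (A, B) γ) :=
  sap_lemma1e_general n A B hA i β γ
end
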